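/- arXiv:0710.1482 — 3 statements merged into one kernel-verified Lean document; each statement's English description precedes it below -/
import Mathlib

section
/- Iterated ε-bypass corollary (Corollary: no new information): let N₀, N₁, …, N_m : NFA Σ σ be a sequence of automata such that for each i < m the language accepted by N_{i+1} equals the language accepted by sat N_i. Then for every word α accepted by N_m there exists a word α' accepted by N₀ with Red* α' α. -/
/-- The four-letter alphabet Σ = {𝟎, 𝟏, 𝟎̄, 𝟏̄}. -/
inductive Sig : Type where
  | c0 : Sig  -- 𝟎
  | c1 : Sig  -- 𝟏
  | b0 : Sig  -- 𝟎̄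
  | b1 : Sig  -- 𝟏̄
  deriving DecidableEq

open Sig

/-- A letter is unbarred if it is 𝟎 or 𝟏. -/
def Unbarred : Sig → Prop
  | c0 => True
  | c1 => True
  | b0 => False
  | b1 => False

/-- A letter is barred if it is 𝟎̄ or 𝟏̄. -/
def Barred : Sig → Prop
  | c0 => False
  | c1 => False
  | b0 => True
  | b1 => True

/-- One-step reduction: delete an adjacent factor 𝟎̄𝟎 or 𝟏̄𝟏. -/
def Red (w w' : List Sig) : Prop :=
  ∃ u v : List Sig, (w = u ++ [b0, c0] ++ v ∨ w = u ++ [b1, c1] ++ v) ∧ w' = u ++ v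

/-- Barring an unbarred letter: bar(𝟎)=𝟎̄, bar(𝟏)=𝟏̄ (identity on barred letters). -/
def bar : Sig → Sig
  | c0 => b0
  | c1 => b1
  | b0 => b0
  | b1 => b1

/-- Bypass saturation: add an ε-edge bypassing every pair of consecutive edges
labeled 𝟎̄𝟎 or 𝟏̄𝟏; keep all letter transitions, start and accept sets. -/
def sat {σ : Type*} (N : NFA Sig σ) : εNFA Sig σ where
  step s := fun o => match o with
    | some a => N.step s a
    | none => { q'' | ∃ q, ∃ a ∈ ({c0, c1} : Set Sig), q ∈ N.step s (bar a) ∧ q'' ∈ N.step q a }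
  start := N.start
  accept := N.accept

/-! A bypass ε-edge of `sat N` stands for two edges of `N` labelled `bar a, a`, so every run of
`sat N` on `α` unfolds to a run of `N` on a word obtained from `α` by inserting factors `𝟎̄𝟎`
and `𝟏̄𝟏`, which reduces back to `α`. Iterating along the chain and composing the reductions
gives the theorem. -/

lemma Red.append_right {x y : List Sig} (h : Red x y) (z : List Sig) : Red (x ++ z) (y ++ z) := by
  obtain ⟨u, v, hx, rfl⟩ := h
  exact ⟨u, v ++ z, by rcases hx with rfl | rfl <;> simp, by simp⟩

lemma reflTransGen_red_append_right {x y : List Sig} (h : Relation.ReflTransGen Red x y)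
    (z : List Sig) : Relation.ReflTransGen Red (x ++ z) (y ++ z) :=
  h.lift (· ++ z) fun _ _ hxy => hxy.append_right z

lemma red_append_bar {a : Sig} (ha : a ∈ ({c0, c1} : Set Sig)) (w : List Sig) :
    Red (w ++ [bar a, a]) w := by
  refine ⟨w, [], ?_, by simp⟩
  rcases ha with rfl | rfl <;> simp [bar]

lemma εNFA.εClosure_subset_of_step_none {α σ : Type*} (M : εNFA α σ) {S T : Set σ}
    (hST : S ⊆ T) (hT : ∀ s ∈ T, M.step s none ⊆ T) : M.εClosure S ⊆ T := by
  intro q hq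
  induction hq with
  | base s hs => exact hST hs
  | step s t hst _ ih => exact hT s ih hst

section EvalUpToRed

variable {σ : Type*} (N : NFA Sig σ) (S : Set σ)

def NFA.evalFromUpToRed (w : List Sig) : Set σ :=
  {q | ∃ w', q ∈ N.evalFrom S w' ∧ Relation.ReflTransGen Red w' w}

lemma NFA.evalFrom_subset_evalFromUpToRed (w : List Sig) :
    N.evalFrom S w ⊆ N.evalFromUpToRed S w :=
  fun _ hq => ⟨w, hq, .refl⟩

lemma NFA.stepSet_evalFromUpToRed_subset (w : List Sig) (a : Sig) :
    N.stepSet (N.evalFromUpToRed S w) a ⊆ N.evalFromUpToRed S (w ++ [a]) := by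
  intro q hq
  obtain ⟨s, ⟨w', hs, hw'⟩, hq⟩ := N.mem_stepSet.1 hq
  refine ⟨w' ++ [a], ?_, reflTransGen_red_append_right hw' [a]⟩
  rw [NFA.evalFrom_append, NFA.evalFrom_singleton]
  exact N.mem_stepSet.2 ⟨s, hs, hq⟩

lemma sat_step_none_subset_evalFromUpToRed (w : List Sig) :
    ∀ s ∈ N.evalFromUpToRed S w, (sat N).step s none ⊆ N.evalFromUpToRed S w := by
  rintro s ⟨w', hs, hw'⟩ q ⟨p, a, ha, hp, hq⟩
  refine ⟨w' ++ [bar a, a], ?_, .head (red_append_bar ha w') hw'⟩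
  rw [show w' ++ [bar a, a] = w' ++ [bar a] ++ [a] by simp, NFA.evalFrom_append,
    NFA.evalFrom_append, NFA.evalFrom_singleton, NFA.evalFrom_singleton]
  exact N.mem_stepSet.2 ⟨p, N.mem_stepSet.2 ⟨s, hs, hp⟩, hq⟩

lemma sat_εClosure_evalFromUpToRed (w : List Sig) {T : Set σ}
    (hT : T ⊆ N.evalFromUpToRed S w) : (sat N).εClosure T ⊆ N.evalFromUpToRed S w :=
  (sat N).εClosure_subset_of_step_none hT (sat_step_none_subset_evalFromUpToRed N S w)

lemma sat_evalFrom_subset (w : List Sig) :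
    (sat N).evalFrom S w ⊆ N.evalFromUpToRed S w := by
  induction w using List.reverseRecOn with
  | nil =>
    rw [εNFA.evalFrom_nil]
    exact sat_εClosure_evalFromUpToRed N S [] (N.evalFrom_subset_evalFromUpToRed S [])
  | append_singleton w a ih =>
    intro q hq
    rw [εNFA.evalFrom_append_singleton, εNFA.mem_stepSet_iff] at hq
    obtain ⟨s, hs, hq⟩ := hq
    refine sat_εClosure_evalFromUpToRed N S (w ++ [a]) ?_ hq
    exact fun t ht => N.stepSet_evalFromUpToRed_subset S w a (N.mem_stepSet.2 ⟨s, ih hs, ht⟩)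

end EvalUpToRed

lemma exists_reflTransGen_red_of_mem_sat_accepts {σ : Type*} (N : NFA Sig σ) {α : List Sig}
    (hα : α ∈ (sat N).accepts) : ∃ α' ∈ N.accepts, Relation.ReflTransGen Red α' α := by
  obtain ⟨q, hq, hqα⟩ := hα
  obtain ⟨α', hqα', hα'⟩ := sat_evalFrom_subset N N.start α hqα
  exact ⟨α', ⟨q, hq, hqα'⟩, hα'⟩

/-- Iterated ε-bypass corollary (no new information): any word accepted by the
final automaton is a reduced version of a word accepted by the initial one. -/
theorem stmt5 {σ : Type*} (m : ℕ) (N : ℕ → NFA Sig σ)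
    (h : ∀ i < m, (N (i + 1)).accepts = (sat (N i)).accepts) :
    ∀ α ∈ (N m).accepts, ∃ α' ∈ (N 0).accepts, Relation.ReflTransGen Red α' α := by
  induction m with
  | zero => exact fun α hα => ⟨α, hα, .refl⟩
  | succ m ih =>
    intro α hα
    rw [h m m.lt_succ_self] at hα
    obtain ⟨β, hβ, hβα⟩ := exists_reflTransGen_red_of_mem_sat_accepts (N m) hα
    obtain ⟨α', hα', hα'β⟩ := ih (fun i hi => h i (Nat.lt_succ_of_lt hi)) β hβ
    exact ⟨α', hα', hα'β.trans hβα⟩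
end

section
/- Closure corollary: let N : NFA Σ σ satisfy that the language accepted by sat N equals the language accepted by N, and let L₀ be any language over Σ with L₀ contained in the language of N. Then for every α ∈ L₀ with Red* α α', the word α' is accepted by N. -/
open Sig

/-! A factor `bar a, a` read along an accepting run of `N` is skipped by the corresponding
bypass ε-edge of `sat N`, so a reduction step maps `N.accepts` into `(sat N).accepts`, which is
`N.accepts` again at a fixed point; induct along `Red*`. -/

theorem List.reduceOption_map_some {α : Type*} (x : List α) : (x.map some).reduceOption = x := by
  induction x with
  | nil => rfl
  | cons a x ih => rw [List.map_cons, List.reduceOption_cons_of_some, ih]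

theorem NFA.Path.isPath_map_some {α σ : Type*} {N : NFA α σ} {M : εNFA α σ}
    (hstep : ∀ s a, N.step s a ⊆ M.step s (some a)) {s t : σ} {x : List α} (p : N.Path s t x) :
    M.IsPath s t (x.map some) := by
  induction p with
  | nil s => exact .nil s
  | cons t s u a x hta _ ih => exact .cons t s u (some a) _ (hstep s a hta) ih

theorem Red.exists_bar {w w' : List Sig} (h : Red w w') :
    ∃ u v, ∃ a ∈ ({c0, c1} : Set Sig), w = u ++ [bar a, a] ++ v ∧ w' = u ++ v := by
  obtain ⟨u, v, h0 | h1, rfl⟩ := h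
  · exact ⟨u, v, c0, Or.inl rfl, h0, rfl⟩
  · exact ⟨u, v, c1, Or.inr rfl, h1, rfl⟩

section Saturation

variable {σ : Type*} (N : NFA Sig σ)

theorem mem_sat_accepts_of_bypass {u v : List Sig} {a : Sig} (ha : a ∈ ({c0, c1} : Set Sig))
    (hw : u ++ [bar a, a] ++ v ∈ N.accepts) : u ++ v ∈ (sat N).accepts := by
  obtain ⟨t, ht, hwt⟩ := hw
  rw [NFA.eval, NFA.evalFrom_append, NFA.evalFrom_append] at hwt
  obtain ⟨q, hq, hv⟩ := NFA.mem_evalFrom_iff_exists.mp hwt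
  obtain ⟨p, hp, hq⟩ := NFA.mem_evalFrom_iff_exists.mp hq
  obtain ⟨s, hs, hu⟩ := NFA.mem_evalFrom_iff_exists.mp hp
  rw [NFA.evalFrom_cons, NFA.stepSet_singleton, NFA.evalFrom_singleton, NFA.mem_stepSet] at hq
  obtain ⟨r, hr, hq⟩ := hq
  obtain ⟨pu⟩ := NFA.mem_evalFrom_iff_nonempty_path.mp hu
  obtain ⟨pv⟩ := NFA.mem_evalFrom_iff_nonempty_path.mp hv
  refine (sat N).mem_accepts_iff_exists_path.2
    ⟨s, t, u.map some ++ none :: v.map some, hs, ht, ?_, ?_⟩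
  · rw [List.reduceOption_append, List.reduceOption_cons_of_none, List.reduceOption_map_some,
      List.reduceOption_map_some]
  have hstep : ∀ s a, N.step s a ⊆ (sat N).step s (some a) := fun _ _ => subset_rfl
  rw [εNFA.isPath_append]
  exact ⟨p, pu.isPath_map_some hstep,
    .cons q p t none _ ⟨r, a, ha, hr, hq⟩ (pv.isPath_map_some hstep)⟩

theorem mem_accepts_of_reflTransGen_red (h : (sat N).accepts = N.accepts) {w w' : List Sig}
    (hred : Relation.ReflTransGen Red w w') (hw : w ∈ N.accepts) : w' ∈ N.accepts := by
  induction hred with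
  | refl => exact hw
  | tail _ hstep ih =>
    obtain ⟨u, v, a, ha, rfl, rfl⟩ := hstep.exists_bar
    exact h ▸ mem_sat_accepts_of_bypass N ha ih

end Saturation

/-- Closure corollary: reducts of words of a sublanguage L₀ of the fixed-point
automaton's language are accepted by the fixed-point automaton. -/
theorem stmt7 {σ : Type*} (N : NFA Sig σ)
    (h : (sat N).accepts = N.accepts)
    (L₀ : Language Sig) (hL : L₀ ≤ N.accepts) :
    ∀ α ∈ L₀, ∀ α', Relation.ReflTransGen Red α α' → α' ∈ N.accepts :=
  fun _ hα _ hred => mem_accepts_of_reflTransGen_red N h hred (hL hα)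
end

section
/- Equivalence theorem, part 1: let N_m : NFA Σ σ satisfy that the language accepted by sat N_m equals the language accepted by N_m, and let L₀ be a language over Σ with L₀ contained in the language of N_m. Let N = N_m↾ be the restriction of N_m to unbarred transitions. If α ∈ L₀, Red* α β, and every letter of β is unbarred (β is a canonical forward path, not ⊥), then β is accepted by N. -/
open Sig

/-- Restriction of an NFA to unbarred transitions: delete all edges labeled 𝟎̄ or 𝟏̄. -/
def restrict {σ : Type*} (N : NFA Sig σ) : NFA Sig σ where
  step s := fun a => match a with
    | c0 => N.step s c0
    | c1 => N.step s c1
    | b0 => ∅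
    | b1 => ∅
  start := N.start
  accept := N.accept

/-! A word of `N` with a factor `bar a · a` has an accepting run crossing the two edges in a row,
and `sat N` replaces them by a single ε-edge, so the reduced word is accepted by `sat N`, hence
by `N`. Words without barred letters then run identically in `N` and in its restriction. -/

section

variable {σ : Type*}

theorem NFA.mem_evalFrom_singleton_cons {α : Type*} {N : NFA α σ} {s t : σ} {a : α}
    {x : List α} :
    t ∈ N.evalFrom {s} (a :: x) ↔ ∃ r ∈ N.step s a, t ∈ N.evalFrom {r} x := by
  rw [NFA.evalFrom_cons, NFA.stepSet_singleton, NFA.mem_evalFrom_iff_exists]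

theorem NFA.mem_evalFrom_singleton_append {α : Type*} {N : NFA α σ} {s t : σ} {x y : List α} :
    t ∈ N.evalFrom {s} (x ++ y) ↔ ∃ r ∈ N.evalFrom {s} x, t ∈ N.evalFrom {r} y := by
  rw [NFA.evalFrom_append, NFA.mem_evalFrom_iff_exists]

theorem sat_isPath_map_some {N : NFA Sig σ} {s t : σ} {x : List Sig}
    (h : t ∈ N.evalFrom {s} x) : (sat N).IsPath s t (x.map some) := by
  induction x generalizing s with
  | nil => simpa [NFA.evalFrom_nil, eq_comm] using h
  | cons a x ih =>
    obtain ⟨r, hr, ht⟩ := NFA.mem_evalFrom_singleton_cons.mp h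
    exact .cons r s t (some a) _ hr (ih ht)

theorem mem_accepts_sat_of_bypass {N : NFA Sig σ} {a : Sig} (ha : a ∈ ({c0, c1} : Set Sig))
    {u v : List Sig} (hw : u ++ [bar a, a] ++ v ∈ N.accepts) : u ++ v ∈ (sat N).accepts := by
  obtain ⟨t, ht, hst⟩ := NFA.mem_accepts.mp hw
  obtain ⟨s, hs, hst⟩ := NFA.mem_evalFrom_iff_exists.mp hst
  obtain ⟨p, hp, hpt⟩ := NFA.mem_evalFrom_singleton_append.mp hst
  obtain ⟨q, hq, hqt⟩ := NFA.mem_evalFrom_singleton_append.mp hp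
  obtain ⟨q₁, hq₁, hq₁p⟩ := NFA.mem_evalFrom_singleton_cons.mp hqt
  obtain ⟨q₂, hq₂, hq₂p⟩ := NFA.mem_evalFrom_singleton_cons.mp hq₁p
  have hbypass : p ∈ (sat N).step q none :=
    ⟨q₁, a, ha, hq₁, by simpa using hq₂p ▸ hq₂⟩
  refine (sat N).mem_accepts_iff_exists_path.mpr
    ⟨s, t, u.map some ++ none :: v.map some, hs, ht,
      by simp [List.reduceOption, List.filterMap_map], ?_⟩
  exact (sat N).isPath_append.mpr ⟨q, sat_isPath_map_some hq, .cons p q t none _ hbypass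
    (sat_isPath_map_some hpt)⟩

theorem Red.mem_accepts {N : NFA Sig σ} (h : (sat N).accepts = N.accepts) {w w' : List Sig}
    (hr : Red w w') (hw : w ∈ N.accepts) : w' ∈ N.accepts := by
  obtain ⟨u, v, hw' | hw', rfl⟩ := hr <;> subst hw' <;> rw [← h]
  · exact mem_accepts_sat_of_bypass (a := c0) (by simp) hw
  · exact mem_accepts_sat_of_bypass (a := c1) (by simp) hw

theorem restrict_evalFrom_of_unbarred (N : NFA Sig σ) (S : Set σ) {x : List Sig}
    (hx : ∀ a ∈ x, Unbarred a) : (restrict N).evalFrom S x = N.evalFrom S x := by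
  refine List.foldl_ext _ _ S fun T a ha => ?_
  cases a <;> first | rfl | exact (hx _ ha).elim

end

/-- Equivalence theorem, part 1: every canonical forward path (all letters unbarred)
obtained by reducing a word of L₀ is accepted by the restricted automaton. -/
theorem stmt8 {σ : Type*} (Nm : NFA Sig σ)
    (h : (sat Nm).accepts = Nm.accepts)
    (L₀ : Language Sig) (hL : L₀ ≤ Nm.accepts) :
    ∀ α ∈ L₀, ∀ β, Relation.ReflTransGen Red α β → (∀ a ∈ β, Unbarred a) →
      β ∈ (restrict Nm).accepts := by
  intro α hα β hred hβ
  have hacc : β ∈ Nm.accepts := by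
    clear hβ
    induction hred with
    | refl => exact hL hα
    | tail _ hr ih => exact hr.mem_accepts h ih
  rw [NFA.mem_accepts] at hacc ⊢
  exact restrict_evalFrom_of_unbarred Nm Nm.start hβ ▸ hacc
end
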